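/- The number of words of length p ≥ 2 over the alphabet {0,1,2} that occur as the initial p ternary digits of some ternary expansion of some element of the Cantor set equals 5·2^{p−1} − 2. -/

import Mathlib

/-!
Since `C = C / 3 ∪ (2 + C) / 3` and `C ∩ [1/3, 2/3] = {1/3, 2/3}`, a digit sequence `d₀d₁…`
represents a point of `C` iff either `d₀ ≠ 1` and the tail `d₁d₂…` represents a point of `C`, or
`d₀ = 1` and the tail represents `0` or `1`, i.e. is `000…` or `222…`. Hence a word `c w` is an
initial word iff `c ≠ 1` and `w` is one, or `c = 1` and `w` is constantly `0` or constantly `2`.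
The number `N p` of initial words of length `p` thus satisfies `N 0 = 1`, `N 1 = 3` and
`N (p + 1) = 2 N p + 2` for `p ≥ 1`, which gives `N p = 5 · 2 ^ (p - 1) - 2`.
-/

open Real

namespace Real

theorem ofDigits_eq_zero_iff {b : ℕ} [NeZero b] {a : ℕ → Fin b} : ofDigits a = 0 ↔ a = 0 := by
  rw [ofDigits, ← summable_ofDigitsTerm.hasSum_iff,
    hasSum_zero_iff_of_nonneg fun _ ↦ ofDigitsTerm_nonneg]
  simp [funext_iff, ofDigitsTerm, NeZero.ne b, Fin.val_eq_zero_iff]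

theorem ofDigits_rev {b : ℕ} [NeZero b] (a : ℕ → Fin (b + 1)) :
    ofDigits (fun i ↦ (a i).rev) = 1 - ofDigits a := by
  rw [eq_sub_iff_add_eq, ← ofDigits_const_last_eq_one b, ofDigits, ofDigits, ofDigits,
    ← summable_ofDigitsTerm.tsum_add summable_ofDigitsTerm]
  congr 1 with i
  simp only [ofDigitsTerm, Fin.val_rev, Fin.val_last, ← add_mul]
  push_cast [Nat.cast_sub (Nat.lt_succ_iff.mp (a i).is_lt)]
  ring

theorem ofDigits_eq_one_iff {b : ℕ} [NeZero b] {a : ℕ → Fin (b + 1)} :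
    ofDigits a = 1 ↔ a = fun _ ↦ Fin.last b := by
  rw [eq_comm, ← sub_eq_zero, ← ofDigits_rev, ofDigits_eq_zero_iff]
  simp [funext_iff, Fin.rev_eq_iff]

theorem ofDigits_eq_add_div {b : ℕ} (a : ℕ → Fin b) :
    ofDigits a = ((a 0 : ℝ) + ofDigits (fun i ↦ a (i + 1))) / b := by
  rw [ofDigits_eq_sum_add_ofDigits a 1]
  simp only [ofDigitsTerm, Finset.sum_range_one]
  ring

end Real

theorem one_mem_cantorSet : (1 : ℝ) ∈ cantorSet := by
  rw [← ofDigits_const_last_eq_one 2]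
  exact ofDigits_zero_two_sequence_mem_cantorSet fun _ ↦ by decide

theorem div_three_mem_cantorSet_iff {y : ℝ} (hy : y ≤ 1) :
    y / 3 ∈ cantorSet ↔ y ∈ cantorSet := by
  refine ⟨fun h ↦ ?_, fun h ↦ by rw [cantorSet_eq_union_halves]; exact Or.inl ⟨y, h, rfl⟩⟩
  rw [cantorSet_eq_union_halves] at h
  rcases h with ⟨x, hx, hxy⟩ | ⟨x, hx, hxy⟩
  · rwa [show y = x by simp only at hxy; linarith]
  · linarith [(cantorSet_subset_unitInterval hx).1]

theorem two_add_div_three_mem_cantorSet_iff {y : ℝ} (hy : 0 ≤ y) :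
    (2 + y) / 3 ∈ cantorSet ↔ y ∈ cantorSet := by
  refine ⟨fun h ↦ ?_, fun h ↦ by rw [cantorSet_eq_union_halves]; exact Or.inr ⟨y, h, rfl⟩⟩
  rw [cantorSet_eq_union_halves] at h
  rcases h with ⟨x, hx, hxy⟩ | ⟨x, hx, hxy⟩
  · linarith [(cantorSet_subset_unitInterval hx).2]
  · rwa [show y = x by simp only at hxy; linarith]

theorem one_add_div_three_mem_cantorSet_iff {y : ℝ} (hy : y ∈ Set.Icc 0 1) :
    (1 + y) / 3 ∈ cantorSet ↔ y = 0 ∨ y = 1 := by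
  rw [cantorSet_eq_union_halves]
  refine ⟨?_, ?_⟩
  · rintro (⟨x, hx, hxy⟩ | ⟨x, hx, hxy⟩) <;> simp only at hxy
    · left; linarith [hy.1, (cantorSet_subset_unitInterval hx).2]
    · right; linarith [hy.2, (cantorSet_subset_unitInterval hx).1]
  · rintro (rfl | rfl)
    · exact Or.inl ⟨1, one_mem_cantorSet, by norm_num⟩
    · exact Or.inr ⟨0, zero_mem_cantorSet, by norm_num⟩

theorem ofDigits_mem_cantorSet_iff (a : ℕ → Fin 3) :
    ofDigits a ∈ cantorSet ↔
      (a 0 ≠ 1 ∧ ofDigits (fun i ↦ a (i + 1)) ∈ cantorSet) ∨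
        (a 0 = 1 ∧ ((fun i ↦ a (i + 1)) = 0 ∨ (fun i ↦ a (i + 1)) = fun _ ↦ 2)) := by
  have hy := Set.mem_Icc.mpr ⟨ofDigits_nonneg (fun i ↦ a (i + 1)), ofDigits_le_one _⟩
  rw [ofDigits_eq_add_div, ← ofDigits_eq_zero_iff,
    show (fun _ : ℕ ↦ (2 : Fin 3)) = fun _ ↦ Fin.last 2 from rfl, ← ofDigits_eq_one_iff]
  generalize ofDigits (fun i ↦ a (i + 1)) = y at hy
  generalize a 0 = c
  fin_cases c
  · simpa using div_three_mem_cantorSet_iff hy.2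
  · simpa using one_add_div_three_mem_cantorSet_iff hy
  · simpa using two_add_div_three_mem_cantorSet_iff hy.1

def IsCantorPrefix {p : ℕ} (w : Fin p → Fin 3) : Prop :=
  ∃ d : ℕ → Fin 3, ofDigits d ∈ cantorSet ∧ ∀ i : Fin p, d i = w i

theorem isCantorPrefix_of_isEmpty (w : Fin 0 → Fin 3) : IsCantorPrefix w :=
  ⟨0, by rw [ofDigits_eq_zero_iff.mpr rfl]; exact zero_mem_cantorSet, finZeroElim⟩

theorem isCantorPrefix_cons {p : ℕ} (c : Fin 3) (w : Fin p → Fin 3) :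
    IsCantorPrefix (Fin.cons c w : Fin (p + 1) → Fin 3) ↔
      (c ≠ 1 ∧ IsCantorPrefix w) ∨ (c = 1 ∧ (w = 0 ∨ w = fun _ ↦ 2)) := by
  have agree_cons (e : ℕ → Fin 3) :
      (∀ i : Fin (p + 1), Stream'.cons c e i = (Fin.cons c w : Fin (p + 1) → Fin 3) i) ↔
        ∀ i : Fin p, e i = w i := by
    simp [Fin.forall_fin_succ, Stream'.cons]
  constructor
  · rintro ⟨d, hd, hdw⟩
    have hd0 : d 0 = c := hdw 0
    have htail (i : Fin p) : d (i + 1) = w i := hdw i.succ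
    rw [ofDigits_mem_cantorSet_iff, hd0] at hd
    rcases hd with ⟨hc, ht⟩ | ⟨hc, ht | ht⟩
    · exact Or.inl ⟨hc, _, ht, htail⟩
    · exact Or.inr ⟨hc, Or.inl (funext fun i ↦ by rw [← htail i, congrFun ht i]; rfl)⟩
    · exact Or.inr ⟨hc, Or.inr (funext fun i ↦ by rw [← htail i, congrFun ht i])⟩
  · rintro (⟨hc, e, he, hew⟩ | ⟨rfl, rfl | rfl⟩)
    · exact ⟨Stream'.cons c e, (ofDigits_mem_cantorSet_iff _).mpr (Or.inl ⟨hc, he⟩),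
        (agree_cons e).mpr hew⟩
    · exact ⟨Stream'.cons 1 fun _ ↦ 0,
        (ofDigits_mem_cantorSet_iff _).mpr (Or.inr ⟨rfl, Or.inl rfl⟩), (agree_cons _).mpr fun _ ↦ rfl⟩
    · exact ⟨Stream'.cons 1 fun _ ↦ 2,
        (ofDigits_mem_cantorSet_iff _).mpr (Or.inr ⟨rfl, Or.inr rfl⟩), (agree_cons _).mpr fun _ ↦ rfl⟩

theorem card_isCantorPrefix_succ (p : ℕ) :
    Nat.card {w : Fin (p + 1) → Fin 3 // IsCantorPrefix w} =
      2 * Nat.card {w : Fin p → Fin 3 // IsCantorPrefix w} +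
        Nat.card {w : Fin p → Fin 3 // w = 0 ∨ w = fun _ ↦ 2} := by
  calc Nat.card {w : Fin (p + 1) → Fin 3 // IsCantorPrefix w}
      = Nat.card {x : Fin 3 × (Fin p → Fin 3) //
          IsCantorPrefix (Fin.cons x.1 x.2 : Fin (p + 1) → Fin 3)} :=
        Nat.card_congr ((Fin.consEquiv fun _ ↦ Fin 3).subtypeEquiv fun _ ↦ Iff.rfl).symm
    _ = ∑ c : Fin 3,
          Nat.card {w : Fin p → Fin 3 // IsCantorPrefix (Fin.cons c w : Fin (p + 1) → Fin 3)} :=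
        (Nat.card_congr (Equiv.subtypeProdEquivSigmaSubtype fun c w ↦
          IsCantorPrefix (Fin.cons c w : Fin (p + 1) → Fin 3))).trans Nat.card_sigma
    _ = _ := by
        simp only [Fin.sum_univ_three, isCantorPrefix_cons, Fin.isValue, ne_eq, zero_ne_one,
          not_false_eq_true, true_and, false_and, or_false, not_true_eq_false, false_or,
          Fin.reduceEq]
        ring

theorem card_eq_zero_or_eq_const_two (p : ℕ) :
    Nat.card {w : Fin (p + 1) → Fin 3 // w = 0 ∨ w = fun _ ↦ 2} = 2 :=
  (Nat.card_coe_set_eq _).trans (Set.ncard_pair fun h ↦ by simpa using congrFun h 0)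

theorem card_isCantorPrefix (p : ℕ) :
    Nat.card {w : Fin (p + 1) → Fin 3 // IsCantorPrefix w} = 5 * 2 ^ p - 2 := by
  induction p with
  | zero =>
    have hconst (w : Fin 0 → Fin 3) : w = 0 ∨ w = fun _ ↦ 2 := Or.inl (Subsingleton.elim _ _)
    rw [card_isCantorPrefix_succ, Nat.card_congr (Equiv.subtypeUnivEquiv hconst),
      Nat.card_congr (Equiv.subtypeUnivEquiv isCantorPrefix_of_isEmpty)]
    simp
  | succ p ih =>
    rw [card_isCantorPrefix_succ, ih, card_eq_zero_or_eq_const_two, pow_succ]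
    have := Nat.one_le_two_pow (n := p)
    omega

/-- For `p ≥ 2`, the number of words of length `p` over the alphabet
`{0,1,2}` that occur as the initial `p` ternary digits of some ternary expansion
`0.d_1 d_2 …` of some element of the (middle-thirds) Cantor set equals `5·2^(p−1) − 2`.
(`cantorSet` is Mathlib's middle-thirds Cantor set.) -/
theorem cantor_initial_words_count (p : ℕ) (hp : 2 ≤ p) :
    Nat.card {b : Fin p → Fin 3 //
        ∃ d : ℕ → Fin 3,
          (∑' i : ℕ, ((d i : ℕ) : ℝ) / 3 ^ (i + 1)) ∈ cantorSet ∧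
          ∀ i : Fin p, d (i : ℕ) = b i} =
      5 * 2 ^ (p - 1) - 2 := by
  obtain ⟨q, rfl⟩ : ∃ q, p = q + 1 := ⟨p - 1, by omega⟩
  have tsum_eq_ofDigits (d : ℕ → Fin 3) : ∑' i : ℕ, ((d i : ℕ) : ℝ) / 3 ^ (i + 1) = ofDigits d := by
    simp [ofDigits, ofDigitsTerm, div_eq_mul_inv]
  simp only [tsum_eq_ofDigits]
  exact card_isCantorPrefix q
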